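/- arXiv:2110.08201 — 7 statements merged into one kernel-verified Lean document; each statement's English description precedes it below -/
import Mathlib

section
/- For every μ ∈ (0,1) and every complex number z = x + iy with 0 < x < π and y ∈ ℝ, one has |z^{1-μ} / sin z| ≤ x^{1-μ} / sin x, with strict inequality when y ≠ 0. -/
open Real Complex

theorem stmt_0 (μ : ℝ) (hμ : μ ∈ Set.Ioo (0:ℝ) 1) (x y : ℝ)
    (hx : 0 < x) (hx' : x < Real.pi) :
    ‖((↑x + ↑y * Complex.I) ^ ((1 : ℂ) - (μ : ℂ)) /
        Complex.sin (↑x + ↑y * Complex.I))‖ ≤ x ^ (1 - μ) / Real.sin x ∧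
    (y ≠ 0 →
      ‖((↑x + ↑y * Complex.I) ^ ((1 : ℂ) - (μ : ℂ)) /
          Complex.sin (↑x + ↑y * Complex.I))‖ < x ^ (1 - μ) / Real.sin x) := by
  obtain ⟨hμ0, hμ1⟩ := hμ
  have hs : 0 < Real.sin x := Real.sin_pos_of_pos_of_lt_pi hx hx'
  have hz : (↑x + ↑y * Complex.I : ℂ) ≠ 0 := by
    intro h
    have hre := congrArg Complex.re h
    simp at hre
    linarith
  have habsz : ‖(↑x + ↑y * Complex.I : ℂ)‖ = Real.sqrt (x ^ 2 + y ^ 2) :=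
    Complex.norm_add_mul_I x y
  have habspow : ‖((↑x + ↑y * Complex.I : ℂ) ^ ((1 : ℂ) - (μ : ℂ)))‖
      = Real.sqrt (x ^ 2 + y ^ 2) ^ (1 - μ) := by
    rw [Complex.norm_cpow_of_ne_zero hz, habsz]
    simp
  have habssin : ‖Complex.sin (↑x + ↑y * Complex.I)‖
      = Real.sqrt (Real.sin x ^ 2 + Real.sinh y ^ 2) := by
    rw [Complex.sin_add_mul_I]
    rw [show (Complex.sin ↑x * Complex.cosh ↑y + Complex.cos ↑x * Complex.sinh ↑y * Complex.I : ℂ)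
        = ↑(Real.sin x * Real.cosh y) + ↑(Real.cos x * Real.sinh y) * Complex.I by push_cast; ring]
    rw [Complex.norm_add_mul_I]
    congr 1
    nlinarith [Real.sin_sq_add_cos_sq x, Real.cosh_sq y]
  set r := Real.sqrt (x ^ 2 + y ^ 2) with hrdef
  set A := Real.sqrt (Real.sin x ^ 2 + Real.sinh y ^ 2) with hAdef
  have hr2 : r ^ 2 = x ^ 2 + y ^ 2 := Real.sq_sqrt (by positivity)
  have hA2 : A ^ 2 = Real.sin x ^ 2 + Real.sinh y ^ 2 := Real.sq_sqrt (by positivity)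
  have hr0 : 0 ≤ r := Real.sqrt_nonneg _
  have hA0 : 0 ≤ A := Real.sqrt_nonneg _
  clear_value r A
  clear hz hrdef hAdef habsz
  have hApos : 0 < A := by nlinarith
  have hrx : x ≤ r := by nlinarith
  have hrpos : 0 < r := lt_of_lt_of_le hx hrx
  have hsx : Real.sin x ≤ x := (Real.sin_lt hx).le
  -- key inequalities
  have key : r * Real.sin x ≤ x * A := by
    have hy2 : y ^ 2 ≤ Real.sinh y ^ 2 := by
      rcases eq_or_ne y 0 with h | h
      · simp [h]
      · have h1 : |y| < Real.sinh |y| := Real.self_lt_sinh_iff.mpr (abs_pos.mpr h)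
        have h2 : |Real.sinh y| = Real.sinh |y| := Real.abs_sinh y
        nlinarith [abs_nonneg y, _root_.sq_abs y, _root_.sq_abs (Real.sinh y)]
    have hs2 : Real.sin x ^ 2 ≤ x ^ 2 := pow_le_pow_left₀ hs.le hsx 2
    have hprod : y ^ 2 * Real.sin x ^ 2 ≤ Real.sinh y ^ 2 * x ^ 2 :=
      mul_le_mul hy2 hs2 (by positivity) (by positivity)
    have hsq : (r * Real.sin x) ^ 2 ≤ (x * A) ^ 2 := by
      rw [mul_pow, mul_pow, hr2, hA2]; ring_nf; nlinarith [hprod]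
    exact (pow_le_pow_iff_left₀ (by positivity) (by positivity) two_ne_zero).mp hsq
  have keylt : y ≠ 0 → r * Real.sin x < x * A := by
    intro hy
    have h1 : |y| < Real.sinh |y| := Real.self_lt_sinh_iff.mpr (abs_pos.mpr hy)
    have h2 : |Real.sinh y| = Real.sinh |y| := Real.abs_sinh y
    have hy2 : y ^ 2 < Real.sinh y ^ 2 := by
      nlinarith [abs_nonneg y, _root_.sq_abs y, _root_.sq_abs (Real.sinh y)]
    have hs2 : Real.sin x ^ 2 ≤ x ^ 2 := pow_le_pow_left₀ hs.le hsx 2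
    have hprod : y ^ 2 * Real.sin x ^ 2 < Real.sinh y ^ 2 * x ^ 2 := by
      calc y ^ 2 * Real.sin x ^ 2 ≤ y ^ 2 * x ^ 2 :=
            mul_le_mul_of_nonneg_left hs2 (by positivity)
        _ < Real.sinh y ^ 2 * x ^ 2 := by
            have := mul_pos hx hx
            nlinarith [hy2]
    have hsq : (r * Real.sin x) ^ 2 < (x * A) ^ 2 := by
      rw [mul_pow, mul_pow, hr2, hA2]; nlinarith [hprod]
    exact lt_of_pow_lt_pow_left₀ 2 (by positivity) hsq
  -- r^(1-μ) ≤ (x^(1-μ)/x) * r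
  have hmono : r ^ (1 - μ) ≤ (x ^ (1 - μ) / x) * r := by
    have h1 : (r / x) ^ (1 - μ) ≤ (r / x) ^ (1 : ℝ) :=
      Real.rpow_le_rpow_of_exponent_le (by rw [le_div_iff₀ hx]; linarith) (by linarith)
    rw [Real.div_rpow hr0 hx.le, Real.rpow_one] at h1
    have h2 : x ^ (1 - μ) > 0 := Real.rpow_pos_of_pos hx _
    calc r ^ (1 - μ) = x ^ (1 - μ) * (r ^ (1 - μ) / x ^ (1 - μ)) := by field_simp
      _ ≤ x ^ (1 - μ) * (r / x) := by exact mul_le_mul_of_nonneg_left h1 h2.le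
      _ = (x ^ (1 - μ) / x) * r := by ring
  have step : r ^ (1 - μ) * Real.sin x ≤ (x ^ (1 - μ) / x) * (r * Real.sin x) := by
    have := mul_le_mul_of_nonneg_right hmono hs.le
    linarith [this]
  have hpow_pos : 0 < x ^ (1 - μ) / x := by positivity
  rw [norm_div, habspow, habssin]
  constructor
  · rw [div_le_div_iff₀ hApos hs]
    calc r ^ (1 - μ) * Real.sin x ≤ (x ^ (1 - μ) / x) * (r * Real.sin x) := step
      _ ≤ (x ^ (1 - μ) / x) * (x * A) := mul_le_mul_of_nonneg_left key hpow_pos.le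
      _ = x ^ (1 - μ) * A := by
          rw [div_mul_eq_mul_div, mul_div_assoc]
          congr 1
          rw [mul_comm, mul_div_assoc, div_self hx.ne', mul_one]
  · intro hy
    rw [div_lt_div_iff₀ hApos hs]
    calc r ^ (1 - μ) * Real.sin x ≤ (x ^ (1 - μ) / x) * (r * Real.sin x) := step
      _ < (x ^ (1 - μ) / x) * (x * A) := mul_lt_mul_of_pos_left (keylt hy) hpow_pos
      _ = x ^ (1 - μ) * A := by
          rw [div_mul_eq_mul_div, mul_div_assoc]
          congr 1
          rw [mul_comm, mul_div_assoc, div_self hx.ne', mul_one]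
end

section
/- The function y ↦ y · cot y is strictly decreasing on the open interval (0, π/2). -/
open Real

theorem stmt_3 : StrictAntiOn (fun y : ℝ => y * Real.cot y)
    (Set.Ioo 0 (Real.pi / 2)) := by
  have key : StrictAntiOn (fun y : ℝ => y * Real.cos y / Real.sin y)
      (Set.Ioo 0 (Real.pi / 2)) := by
    apply strictAntiOn_of_deriv_neg (convex_Ioo _ _)
    · apply ContinuousOn.div
      · exact (continuous_id.mul Real.continuous_cos).continuousOn
      · exact Real.continuous_sin.continuousOn
      · intro x hx
        exact ne_of_gt (Real.sin_pos_of_pos_of_lt_pi hx.1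
          (lt_trans hx.2 (by linarith [Real.pi_pos])))
    · intro x hx
      rw [interior_Ioo] at hx
      obtain ⟨hx0, hx2⟩ := hx
      have hsin : 0 < Real.sin x :=
        Real.sin_pos_of_pos_of_lt_pi hx0 (lt_trans hx2 (by linarith [Real.pi_pos]))
      have hu : HasDerivAt (fun y : ℝ => y * Real.cos y)
          (1 * Real.cos x + x * (-Real.sin x)) x :=
        (hasDerivAt_id x).mul (Real.hasDerivAt_cos x)
      have hd : HasDerivAt (fun y : ℝ => y * Real.cos y / Real.sin y)
          (((1 * Real.cos x + x * (-Real.sin x)) * Real.sin x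
            - x * Real.cos x * Real.cos x) / Real.sin x ^ 2) x :=
        hu.div (Real.hasDerivAt_sin x) hsin.ne'
      rw [hd.deriv]
      apply div_neg_of_neg_of_pos
      · have hlt : Real.sin x * Real.cos x < x := by
          have h1 : Real.sin x < x := Real.sin_lt hx0
          have h2 : Real.cos x ≤ 1 := Real.cos_le_one x
          nlinarith
        nlinarith [Real.sin_sq_add_cos_sq x]
      · positivity
  intro a ha b hb hab
  have eq1 : ∀ y ∈ Set.Ioo (0:ℝ) (Real.pi / 2),
      y * Real.cot y = y * Real.cos y / Real.sin y := by
    intro y hy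
    rw [Real.cot_eq_cos_div_sin]; ring
  show b * Real.cot b < a * Real.cot a
  rw [eq1 a ha, eq1 b hb]
  exact key ha hb hab
end

section
/- For every complex z with 0 < Re z < π and Im z ≠ 0, and every positive integer n, one has |1 - z²/(n²π²)| > 1 - (Re z)²/(n²π²). -/
open Real Complex

theorem stmt_4 (z : ℂ) (hre : 0 < z.re) (hre' : z.re < Real.pi) (him : z.im ≠ 0)
    (n : ℕ) (hn : 0 < n) :
    1 - z.re ^ 2 / ((n : ℝ) ^ 2 * Real.pi ^ 2) <
      ‖1 - z ^ 2 / ((n : ℂ) ^ 2 * (Real.pi : ℂ) ^ 2)‖ := by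
  have hc : (0:ℝ) < (n : ℝ) ^ 2 * Real.pi ^ 2 := by positivity
  have hkey : ((n : ℂ) ^ 2 * (Real.pi : ℂ) ^ 2) = (((n : ℝ) ^ 2 * Real.pi ^ 2 : ℝ) : ℂ) := by
    push_cast; ring
  have hre_eq : (1 - z ^ 2 / ((n : ℂ) ^ 2 * (Real.pi : ℂ) ^ 2)).re
      = 1 - (z.re ^ 2 - z.im ^ 2) / ((n : ℝ) ^ 2 * Real.pi ^ 2) := by
    rw [hkey, Complex.sub_re, Complex.div_ofReal_re]
    simp [pow_two, Complex.mul_re]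
  have h1 : 1 - z.re ^ 2 / ((n : ℝ) ^ 2 * Real.pi ^ 2)
      < (1 - z ^ 2 / ((n : ℂ) ^ 2 * (Real.pi : ℂ) ^ 2)).re := by
    rw [hre_eq]
    have hy : 0 < z.im ^ 2 := by positivity
    gcongr 1 - ?_ / _
    linarith
  exact h1.trans_le (Complex.re_le_norm _)
end

section
/- Let a_{d,j} = 2^d · d! · π^j / (4^j · (d-j)! · Γ(j/2 + 1)²) for 0 ≤ j ≤ d. Then lim_{d→∞} (1/d) · log( Σ_{j=0}^d a_{d,j} ) = log(π + 2). -/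
open Filter Real


lemma cb_le_four_pow (k : ℕ) : (Nat.centralBinom k : ℝ) ≤ 4 ^ k := by
  have h : Nat.centralBinom k ≤ 4 ^ k := by
    rw [Nat.centralBinom_eq_two_mul_choose]
    calc (2*k).choose k ≤ ∑ i ∈ Finset.range (2*k+1), (2*k).choose i :=
          Finset.single_le_sum (fun i _ => Nat.zero_le _) (by simp [Nat.lt_succ_iff]; omega)
      _ = 2 ^ (2*k) := Nat.sum_range_choose _
      _ = 4 ^ k := by rw [pow_mul]; norm_num
  exact_mod_cast h

lemma four_pow_le_cb (k : ℕ) : (4:ℝ) ^ k ≤ (2*k+1) * Nat.centralBinom k := by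
  have h : 4 ^ k ≤ (2*k+1) * Nat.centralBinom k := by
    calc 4 ^ k = 2 ^ (2*k) := by rw [pow_mul]; norm_num
      _ = ∑ i ∈ Finset.range (2*k+1), (2*k).choose i := (Nat.sum_range_choose _).symm
      _ ≤ ∑ _i ∈ Finset.range (2*k+1), Nat.centralBinom k :=
          Finset.sum_le_sum (fun i _ => Nat.choose_le_centralBinom i k)
      _ = (2*k+1) * Nat.centralBinom k := by simp [Finset.sum_const, mul_comm]
  exact_mod_cast h

lemma gamma_half (k : ℕ) : Real.Gamma ((k:ℝ) + 1/2) =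
    Real.sqrt Real.pi * (Nat.factorial (2*k)) / (4^k * Nat.factorial k) := by
  induction k with
  | zero =>
    norm_num
    exact Real.Gamma_one_half_eq
  | succ n ih =>
    have h : ((n+1 : ℕ):ℝ) + 1/2 = ((n:ℝ) + 1/2) + 1 := by push_cast; ring
    rw [h, Real.Gamma_add_one (by positivity), ih]
    have hf : (Nat.factorial (2*(n+1)) : ℝ) = (2*(n:ℝ)+2)*(2*(n:ℝ)+1)*Nat.factorial (2*n) := by
      have : 2*(n+1) = (2*n+1)+1 := by ring
      rw [this, Nat.factorial_succ, show (2*n+1) = (2*n)+1 from rfl, Nat.factorial_succ]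
      push_cast; ring
    have hf2 : (Nat.factorial (n+1) : ℝ) = ((n:ℝ)+1) * Nat.factorial n := by
      rw [Nat.factorial_succ]; push_cast; ring
    rw [hf, hf2]
    have h1 : (Nat.factorial n : ℝ) ≠ 0 := by positivity
    field_simp
    ring
noncomputable def bb (j : ℕ) : ℝ :=
  (Nat.factorial j) * Real.pi ^ j / (4 ^ j * Real.Gamma ((j : ℝ) / 2 + 1) ^ 2)

lemma cb_fact (k : ℕ) : (Nat.centralBinom k : ℝ) * (Nat.factorial k) * (Nat.factorial k)
    = Nat.factorial (2*k) := by
  have hn : (2*k).choose k * Nat.factorial k * Nat.factorial k = Nat.factorial (2*k) := by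
    have h := Nat.choose_mul_factorial_mul_factorial (show k ≤ 2*k by omega)
    simpa [show 2*k-k=k by omega] using h
  rw [Nat.centralBinom_eq_two_mul_choose]
  exact_mod_cast hn

lemma bb_even (k : ℕ) : bb (2*k) = (Nat.centralBinom k) * (Real.pi/4)^(2*k) := by
  unfold bb
  have h1 : ((2*k : ℕ):ℝ)/2 + 1 = (k:ℝ) + 1 := by push_cast; ring
  rw [h1, Real.Gamma_nat_eq_factorial, div_pow, ← cb_fact]
  have h2 : (Nat.factorial k : ℝ) ≠ 0 := by positivity
  have h4 : (4:ℝ)^(2*k) ≠ 0 := by positivity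
  field_simp

lemma bb_odd (k : ℕ) : bb (2*k+1) =
    4 * Real.pi^(2*k) / ((2*(k:ℝ)+2) * Nat.centralBinom (k+1)) := by
  unfold bb
  have h1 : ((2*k+1 : ℕ):ℝ)/2 + 1 = ((k+1 : ℕ):ℝ) + 1/2 := by push_cast; ring
  rw [h1, gamma_half]
  have hcb := cb_fact (k+1)
  have hfe : (Nat.factorial (2*(k+1)) : ℝ) = (2*(k:ℝ)+2) * Nat.factorial (2*k+1) := by
    rw [show 2*(k+1) = (2*k+1)+1 by ring, Nat.factorial_succ]; push_cast; ring
  rw [hfe] at hcb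
  have hsq : Real.sqrt Real.pi ^ 2 = Real.pi := Real.sq_sqrt Real.pi_pos.le
  have h2 : (Nat.factorial (k+1) : ℝ) ≠ 0 := by positivity
  have h3 : (Nat.factorial (2*k+1) : ℝ) ≠ 0 := by positivity
  have h5 : (Nat.centralBinom (k+1) : ℝ) ≠ 0 :=
    Nat.cast_ne_zero.mpr (Nat.centralBinom_ne_zero _)
  have h6 : (2*(k:ℝ)+2) ≠ 0 := by positivity
  have hpi0 : Real.pi ≠ 0 := Real.pi_ne_zero
  rw [hfe, div_pow, mul_pow, hsq, mul_pow]
  field_simp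
  linear_combination (Real.pi^(2*k+1) * ((4:ℝ)^(k+1))^2) * hcb
lemma pow_collapse (k : ℕ) : (Real.pi/2)^(2*k) * 4^k = Real.pi^(2*k) := by
  rw [pow_mul, pow_mul, ← mul_pow]
  congr 1
  ring

lemma pow_collapse' (k : ℕ) : (Real.pi/4)^(2*k) * 4^k = (Real.pi/2)^(2*k) := by
  rw [pow_mul, pow_mul, ← mul_pow]
  congr 1
  ring

lemma bb_le (j : ℕ) : bb j ≤ 2 * (Real.pi/2)^j := by
  have hy : ∀ m : ℕ, (0:ℝ) < (Real.pi/2)^m := fun m => pow_pos (by positivity) m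
  rcases Nat.even_or_odd j with ⟨k, hk⟩ | ⟨k, hk⟩
  · subst hk
    rw [show k + k = 2*k by ring, bb_even]
    have hcb := cb_le_four_pow k
    have h4 : (0:ℝ) < (Real.pi/4)^(2*k) := pow_pos (by positivity) _
    have := pow_collapse' k
    nlinarith [hy (2*k), mul_le_mul_of_nonneg_right hcb h4.le]
  · subst hk
    rw [bb_odd]
    have hcbpos : (0:ℝ) < Nat.centralBinom (k+1) := Nat.cast_pos.mpr (Nat.centralBinom_pos _)
    have hden : (0:ℝ) < (2*(k:ℝ)+2) * Nat.centralBinom (k+1) := by positivity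
    rw [div_le_iff₀ hden]
    have hcb : (4:ℝ)^(k+1) ≤ (2*(k:ℝ)+3) * Nat.centralBinom (k+1) := by
      have := four_pow_le_cb (k+1); push_cast at this; linarith
    have hpc := pow_collapse k
    have hpow : (Real.pi/2)^(2*k+1) = (Real.pi/2)^(2*k) * (Real.pi/2) := pow_succ _ _
    have hpi := Real.pi_gt_three
    -- goal: 4 * π^(2k) ≤ 2 * (π/2)^(2k+1) * ((2k+2) * CB)
    rw [hpow, ← hpc]
    have h1 : (2*(k:ℝ)+3) * Nat.centralBinom (k+1) ≤ Real.pi * (2*(k:ℝ)+2) * Nat.centralBinom (k+1) := by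
      nlinarith [hcbpos]
    have h2 : (4:ℝ)^(k+1) ≤ Real.pi * (2*(k:ℝ)+2) * Nat.centralBinom (k+1) := le_trans hcb h1
    have h3 := mul_le_mul_of_nonneg_left h2 (hy (2*k)).le
    have h4 : (4:ℝ)^(k+1) = 4 * 4^k := by ring
    nlinarith [h3, hy (2*k)]

lemma le_bb (j : ℕ) : 2/Real.pi * (Real.pi/2)^j / (j+1) ≤ bb j := by
  have hy : ∀ m : ℕ, (0:ℝ) < (Real.pi/2)^m := fun m => pow_pos (by positivity) m
  have hpi := Real.pi_gt_three
  rcases Nat.even_or_odd j with ⟨k, hk⟩ | ⟨k, hk⟩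
  · subst hk
    rw [show k + k = 2*k by ring, bb_even]
    have hcb := four_pow_le_cb k
    have h4 : (0:ℝ) < (Real.pi/4)^(2*k) := pow_pos (by positivity) _
    have hpc := pow_collapse' k
    have hj : ((2*k : ℕ):ℝ) + 1 = 2*(k:ℝ)+1 := by push_cast; ring
    rw [hj, div_le_iff₀ (by positivity)]
    -- (2/π) (π/2)^{2k} ≤ CB (π/4)^{2k} (2k+1); have 4^k ≤ (2k+1) CB
    have h1 := mul_le_mul_of_nonneg_right hcb h4.le
    -- 4^k (π/4)^{2k} = (π/2)^{2k} ≤ (2k+1) CB (π/4)^{2k}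
    have h2 : 2/Real.pi ≤ 1 := by
      rw [div_le_one (by positivity)]; linarith
    nlinarith [hy (2*k), h1, h2]
  · subst hk
    rw [bb_odd]
    have hcbpos : (0:ℝ) < Nat.centralBinom (k+1) := Nat.cast_pos.mpr (Nat.centralBinom_pos _)
    have hcb := cb_le_four_pow (k+1)
    have hj : ((2*k+1 : ℕ):ℝ) + 1 = 2*(k:ℝ)+2 := by push_cast; ring
    rw [hj, div_le_div_iff₀ (by positivity) (by positivity)]
    -- (2/π)(π/2)^{2k+1} (2k+2) CB ≤ 4 π^{2k} (2k+2)
    have hpc := pow_collapse k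
    have hpow : (Real.pi/2)^(2*k+1) = (Real.pi/2)^(2*k) * (Real.pi/2) := pow_succ _ _
    have hkey : 2/Real.pi * ((Real.pi/2)^(2*k) * (Real.pi/2)) = (Real.pi/2)^(2*k) := by
      field_simp
    rw [hpow]
    -- goal : 2/π * ((π/2)^{2k} (π/2)) * ((2k+2) CB) ≤ 4 π^{2k} (2k+2)
    have h1 := mul_le_mul_of_nonneg_left hcb (hy (2*k)).le
    -- (π/2)^{2k} CB ≤ (π/2)^{2k} 4^{k+1}; and (π/2)^{2k} 4^{k+1} = 4 π^{2k}
    have h2 : (Real.pi/2)^(2*k) * 4^(k+1) = 4 * Real.pi^(2*k) := by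
      rw [← hpc]; ring
    have h3 := mul_le_mul_of_nonneg_right h1 (show (0:ℝ) ≤ 2*(k:ℝ)+2 by positivity)
    rw [hkey]
    nlinarith [h3, hcbpos, hy (2*k)]
noncomputable def SS (d : ℕ) : ℝ := ∑ j ∈ Finset.range (d + 1),
    (2:ℝ) ^ d * (Nat.factorial d) * Real.pi ^ j /
      (4 ^ j * (Nat.factorial (d - j)) * Real.Gamma ((j : ℝ) / 2 + 1) ^ 2)

lemma term_eq {d j : ℕ} (h : j ≤ d) :
    (2:ℝ) ^ d * (Nat.factorial d) * Real.pi ^ j /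
      (4 ^ j * (Nat.factorial (d - j)) * Real.Gamma ((j : ℝ) / 2 + 1) ^ 2)
    = 2^d * (d.choose j) * bb j := by
  unfold bb
  have hG : 0 < Real.Gamma ((j : ℝ) / 2 + 1) := Real.Gamma_pos_of_pos (by positivity)
  set G := Real.Gamma ((j : ℝ) / 2 + 1) with hGdef
  have hc : (d.choose j : ℝ) * (Nat.factorial j) * (Nat.factorial (d-j)) = Nat.factorial d := by
    exact_mod_cast Nat.choose_mul_factorial_mul_factorial h
  have h1 : (Nat.factorial (d-j) : ℝ) ≠ 0 := by positivity
  have h2 : (Nat.factorial j : ℝ) ≠ 0 := by positivity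
  have h3 : (4:ℝ)^j ≠ 0 := by positivity
  have hG0 : G ≠ 0 := ne_of_gt hG
  field_simp
  linear_combination (-1:ℝ) * hc

lemma binom_sum (d : ℕ) :
    ∑ j ∈ Finset.range (d+1), (d.choose j : ℝ) * (Real.pi/2)^j = (Real.pi/2 + 1)^d := by
  rw [add_pow]
  refine Finset.sum_congr rfl fun j hj => by ring

lemma two_mul_base (d : ℕ) : (2:ℝ)^d * (Real.pi/2+1)^d = (Real.pi+2)^d := by
  rw [← mul_pow]; congr 1; ring

lemma log_succ_div_tendsto : Tendsto (fun d : ℕ => Real.log (d+1) / d) atTop (nhds 0) := by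
  have h1 : Tendsto (fun d : ℕ => Real.log (d+1) / ((d:ℝ)+1)) atTop (nhds 0) := by
    have h := Real.isLittleO_log_id_atTop.tendsto_div_nhds_zero
    exact h.comp (tendsto_atTop_add_const_right atTop 1 tendsto_natCast_atTop_atTop)
  have h2 : Tendsto (fun d : ℕ => ((d:ℝ)+1) / d) atTop (nhds 1) := by
    have : Tendsto (fun d : ℕ => 1 + 1/(d:ℝ)) atTop (nhds (1 + 0)) :=
      tendsto_const_nhds.add (tendsto_const_div_atTop_nhds_zero_nat 1)
    rw [add_zero] at this
    refine this.congr' ?_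
    filter_upwards [eventually_ge_atTop 1] with d hd
    have hd0 : (0:ℝ) < d := by exact_mod_cast hd
    field_simp
  have := h1.mul h2
  rw [zero_mul] at this
  refine this.congr' ?_
  filter_upwards [eventually_ge_atTop 1] with d hd
  have hd0 : (0:ℝ) < d := by exact_mod_cast hd
  field_simp

theorem stmt_10 :
    Tendsto (fun d : ℕ =>
        (1 / (d : ℝ)) * Real.log (∑ j ∈ Finset.range (d + 1),
          (2:ℝ) ^ d * (Nat.factorial d) * Real.pi ^ j /
            (4 ^ j * (Nat.factorial (d - j)) *
              Real.Gamma ((j : ℝ) / 2 + 1) ^ 2)))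
      atTop (nhds (Real.log (Real.pi + 2))) := by
  have hfun : (fun d : ℕ =>
        (1 / (d : ℝ)) * Real.log (∑ j ∈ Finset.range (d + 1),
          (2:ℝ) ^ d * (Nat.factorial d) * Real.pi ^ j /
            (4 ^ j * (Nat.factorial (d - j)) *
              Real.Gamma ((j : ℝ) / 2 + 1) ^ 2)))
      = fun d : ℕ => (1 / (d : ℝ)) * Real.log (SS d) := rfl
  rw [hfun]
  have hpi := Real.pi_gt_three
  have hbase : (0:ℝ) < Real.pi + 2 := by linarith
  have hSrw : ∀ d, SS d = ∑ j ∈ Finset.range (d+1), (2:ℝ)^d * (d.choose j) * bb j := by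
    intro d
    exact Finset.sum_congr rfl fun j hj =>
      term_eq (Nat.lt_succ_iff.mp (Finset.mem_range.mp hj))
  have hupper : ∀ d, SS d ≤ 2 * (Real.pi+2)^d := by
    intro d
    rw [hSrw]
    calc ∑ j ∈ Finset.range (d+1), (2:ℝ)^d * (d.choose j) * bb j
        ≤ ∑ j ∈ Finset.range (d+1), (2:ℝ)^d * (d.choose j) * (2 * (Real.pi/2)^j) := by
          refine Finset.sum_le_sum fun j _ => ?_
          have : (0:ℝ) ≤ 2^d * (d.choose j) := by positivity
          exact mul_le_mul_of_nonneg_left (bb_le j) this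
      _ = 2 * ((2:ℝ)^d * ∑ j ∈ Finset.range (d+1), (d.choose j : ℝ) * (Real.pi/2)^j) := by
          rw [Finset.mul_sum, Finset.mul_sum]
          exact Finset.sum_congr rfl fun j _ => by ring
      _ = 2 * (Real.pi+2)^d := by rw [binom_sum, two_mul_base]
  have hlower : ∀ d : ℕ, 2/Real.pi / (d+1) * (Real.pi+2)^d ≤ SS d := by
    intro d
    rw [hSrw]
    calc 2/Real.pi / (d+1) * (Real.pi+2)^d
        = 2/Real.pi / (d+1) * ((2:ℝ)^d * ∑ j ∈ Finset.range (d+1), (d.choose j : ℝ) * (Real.pi/2)^j) := by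
          rw [binom_sum, two_mul_base]
      _ = ∑ j ∈ Finset.range (d+1), (2:ℝ)^d * (d.choose j) * (2/Real.pi * (Real.pi/2)^j / (d+1)) := by
          rw [Finset.mul_sum, Finset.mul_sum]
          exact Finset.sum_congr rfl fun j _ => by ring
      _ ≤ ∑ j ∈ Finset.range (d+1), (2:ℝ)^d * (d.choose j) * bb j := by
          refine Finset.sum_le_sum fun j hj => ?_
          have hjd : (j:ℝ) + 1 ≤ (d:ℝ) + 1 := by
            have := Nat.lt_succ_iff.mp (Finset.mem_range.mp hj)
            have : (j:ℝ) ≤ d := by exact_mod_cast this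
            linarith
          have hb : 2/Real.pi * (Real.pi/2)^j / (d+1) ≤ bb j := by
            refine le_trans ?_ (le_bb j)
            apply div_le_div_of_nonneg_left _ (by positivity) hjd
            positivity
          have : (0:ℝ) ≤ 2^d * (d.choose j) := by positivity
          exact mul_le_mul_of_nonneg_left hb this
  have hSpos : ∀ d, 0 < SS d := fun d =>
    lt_of_lt_of_le (by positivity) (hlower d)
  have hlogU : ∀ d : ℕ, Real.log (SS d) ≤ Real.log 2 + d * Real.log (Real.pi+2) := by
    intro d
    calc Real.log (SS d) ≤ Real.log (2 * (Real.pi+2)^d) :=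
          Real.log_le_log (hSpos d) (hupper d)
      _ = Real.log 2 + d * Real.log (Real.pi+2) := by
          rw [Real.log_mul (by norm_num) (by positivity), Real.log_pow]
  have hlogL : ∀ d : ℕ, Real.log (2/Real.pi) - Real.log (d+1) + d * Real.log (Real.pi+2)
      ≤ Real.log (SS d) := by
    intro d
    have hne1 : (2/Real.pi : ℝ) ≠ 0 := by positivity
    have hne2 : ((d:ℝ)+1) ≠ 0 := by positivity
    calc Real.log (2/Real.pi) - Real.log (d+1) + d * Real.log (Real.pi+2)
        = Real.log (2/Real.pi / (d+1) * (Real.pi+2)^d) := by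
          rw [Real.log_mul (by positivity) (by positivity), Real.log_pow,
            Real.log_div hne1 hne2]
      _ ≤ Real.log (SS d) := Real.log_le_log (by positivity) (hlower d)
  have hL : Tendsto (fun d : ℕ => Real.log (Real.pi+2) +
      (Real.log (2/Real.pi) - Real.log (d+1)) / d) atTop (nhds (Real.log (Real.pi+2))) := by
    have h0 : Tendsto (fun d : ℕ => (Real.log (2/Real.pi) - Real.log (d+1)) / d) atTop (nhds 0) := by
      have h1 := tendsto_const_div_atTop_nhds_zero_nat (Real.log (2/Real.pi))
      have h2 := log_succ_div_tendsto
      have := h1.sub h2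
      rw [sub_zero] at this
      refine this.congr fun d => ?_
      rw [div_sub_div_same]
    simpa using tendsto_const_nhds.add h0
  have hU : Tendsto (fun d : ℕ => Real.log (Real.pi+2) + Real.log 2 / d) atTop
      (nhds (Real.log (Real.pi+2))) := by
    simpa using tendsto_const_nhds.add (tendsto_const_div_atTop_nhds_zero_nat (Real.log 2))
  refine tendsto_of_tendsto_of_tendsto_of_le_of_le' hL hU ?_ ?_
  · filter_upwards [eventually_ge_atTop 1] with d hd
    have hd0 : (0:ℝ) < d := by exact_mod_cast hd
    have h := hlogL d
    have heq : Real.log (Real.pi+2) + (Real.log (2/Real.pi) - Real.log (d+1)) / d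
        = 1/(d:ℝ) * (Real.log (2/Real.pi) - Real.log (d+1) + d * Real.log (Real.pi+2)) := by
      field_simp
      ring
    rw [heq]
    exact mul_le_mul_of_nonneg_left h (by positivity)
  · filter_upwards [eventually_ge_atTop 1] with d hd
    have hd0 : (0:ℝ) < d := by exact_mod_cast hd
    have h := hlogU d
    have heq : Real.log (Real.pi+2) + Real.log 2 / d
        = 1/(d:ℝ) * (Real.log 2 + d * Real.log (Real.pi+2)) := by
      field_simp
      ring
    rw [heq]
    exact mul_le_mul_of_nonneg_left h (by positivity)
end

section
/- For every fixed λ ∈ [0,1], with j = j(d) = ⌊λd⌋ and a_{d,j} = 2^d d! π^j / (4^j (d-j)! Γ(j/2+1)²), one has lim_{d→∞} (1/d) log a_{d,j} = log 2 + λ log(π/2) - λ log λ - (1-λ) log(1-λ). -/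
open Filter Real Topology

noncomputable def epsf (n : ℕ) : ℝ := Real.log (Nat.factorial n) - n * Real.log n + n

lemma epsf_zero : epsf 0 = 0 := by simp [epsf]

lemma tendsto_epsf_div : Tendsto (fun n : ℕ => epsf n / n) atTop (𝓝 0) := by
  have h1 : Tendsto (fun n : ℕ => Real.log (Stirling.stirlingSeq n) * (1 / (n:ℝ))) atTop (𝓝 0) := by
    have hl : Tendsto (fun n : ℕ => Real.log (Stirling.stirlingSeq n)) atTop (𝓝 (Real.log (Real.sqrt π))) :=
      (Stirling.tendsto_stirlingSeq_sqrt_pi.log (by positivity))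
    have hi : Tendsto (fun n : ℕ => 1 / (n:ℝ)) atTop (𝓝 0) := tendsto_one_div_atTop_nhds_zero_nat
    simpa using hl.mul hi
  have h2 : Tendsto (fun n : ℕ => Real.log (2 * (n:ℝ)) / (2 * (n:ℝ))) atTop (𝓝 0) := by
    have := Real.isLittleO_log_id_atTop.tendsto_div_nhds_zero
    exact this.comp ((tendsto_natCast_atTop_atTop (R := ℝ)).const_mul_atTop two_pos)
  have key : (fun n : ℕ => Real.log (Stirling.stirlingSeq n) * (1 / (n:ℝ)) + Real.log (2 * (n:ℝ)) / (2 * (n:ℝ)))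
      =ᶠ[atTop] (fun n : ℕ => epsf n / n) := by
    filter_upwards [eventually_ge_atTop 1] with n hn
    have hn0 : (0:ℝ) < n := by exact_mod_cast hn
    have hf := Stirling.log_stirlingSeq_formula n
    have h3 : (n:ℝ) * Real.log ((n:ℝ) / Real.exp 1) = n * Real.log n - n := by
      rw [Real.log_div hn0.ne' (Real.exp_pos 1).ne', Real.log_exp]; ring
    rw [hf, h3]
    unfold epsf
    field_simp
    ring
  exact Tendsto.congr' key (by simpa using h1.add h2)

lemma comp_div_zero (f : ℕ → ℝ) (hf : Tendsto (fun n : ℕ => f n / n) atTop (𝓝 0))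
    (k : ℕ → ℕ) (hk : Tendsto k atTop atTop) (hkd : ∀ᶠ d in atTop, k d ≤ d) :
    Tendsto (fun d : ℕ => f (k d) / d) atTop (𝓝 0) := by
  have h1 : Tendsto (fun d : ℕ => f (k d) / (k d)) atTop (𝓝 0) := hf.comp hk
  have h1' : Tendsto (fun d : ℕ => |f (k d) / (k d)|) atTop (𝓝 0) := by
    simpa using h1.abs
  refine squeeze_zero_norm' ?_ h1'
  filter_upwards [hkd, hk.eventually_ge_atTop 1, eventually_ge_atTop 1] with d h1d h2d h3d
  have hk0 : (0:ℝ) < k d := by exact_mod_cast h2d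
  have hd0 : (0:ℝ) < d := by exact_mod_cast h3d
  have hkdr : (k d : ℝ) ≤ d := by exact_mod_cast h1d
  rw [Real.norm_eq_abs, abs_div, abs_div, abs_of_pos hd0, abs_of_pos hk0]
  exact div_le_div_of_nonneg_left (abs_nonneg _) hk0 hkdr

lemma two_log_gamma (n : ℕ) :
    2 * Real.log (Real.Gamma ((n:ℝ)/2 + 1)) =
      Real.log (Real.Gamma ((n:ℝ)/2 + 1) / Real.Gamma ((n:ℝ)/2 + 1/2))
        - n * Real.log 2 + (1/2) * Real.log π + Real.log (Nat.factorial n) := by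
  have h05 : (0:ℝ) < (n:ℝ)/2 + 1/2 := by positivity
  have h1 : (0:ℝ) < (n:ℝ)/2 + 1 := by positivity
  have hg05 := Real.Gamma_pos_of_pos h05
  have hg1 := Real.Gamma_pos_of_pos h1
  have hdup := Real.Gamma_mul_Gamma_add_half ((n:ℝ)/2 + 1/2)
  have e1 : (n:ℝ)/2 + 1/2 + 1/2 = (n:ℝ)/2 + 1 := by ring
  have e2 : 2 * ((n:ℝ)/2 + 1/2) = (n:ℝ) + 1 := by ring
  rw [e1, e2, Real.Gamma_nat_eq_factorial] at hdup
  have hsq : Real.Gamma ((n:ℝ)/2 + 1) ^ 2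
      = (Real.Gamma ((n:ℝ)/2 + 1) / Real.Gamma ((n:ℝ)/2 + 1/2)) *
        ((Nat.factorial n : ℝ) * (2:ℝ) ^ (1 - ((n:ℝ) + 1)) * Real.sqrt π) := by
    rw [← hdup]; field_simp
  have hfac : (0:ℝ) < Nat.factorial n := by exact_mod_cast Nat.factorial_pos n
  have hlog := congrArg Real.log hsq
  rw [Real.log_pow] at hlog
  rw [Real.log_mul (by positivity) (by positivity), Real.log_mul (by positivity) (by positivity),
    Real.log_mul (by positivity) (by positivity), Real.log_rpow two_pos,
    Real.log_sqrt Real.pi_pos.le] at hlog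
  push_cast at hlog ⊢
  rw [hlog]; ring

theorem stmt_11 (lam : ℝ) (hlam : lam ∈ Set.Icc (0:ℝ) 1) :
    Tendsto (fun d : ℕ =>
        (1 / (d : ℝ)) * Real.log
          ((2:ℝ) ^ d * (Nat.factorial d) * Real.pi ^ (⌊lam * d⌋₊) /
            (4 ^ (⌊lam * d⌋₊) * (Nat.factorial (d - ⌊lam * d⌋₊)) *
              Real.Gamma ((⌊lam * d⌋₊ : ℝ) / 2 + 1) ^ 2)))
      atTop
      (nhds (Real.log 2 + lam * Real.log (Real.pi / 2) -
        lam * Real.log lam - (1 - lam) * Real.log (1 - lam))) := by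
  obtain ⟨hlam0, hlam1⟩ := hlam
  rcases eq_or_lt_of_le hlam0 with hzero | hpos
  · -- lam = 0
    subst hzero
    have hval : Real.log 2 + 0 * Real.log (π / 2) - 0 * Real.log 0 - (1 - 0) * Real.log (1 - 0)
        = Real.log 2 := by
      norm_num
    rw [hval]
    have heq : ∀ᶠ d : ℕ in atTop, (Real.log 2 : ℝ) =
        (1 / (d : ℝ)) * Real.log ((2:ℝ) ^ d * (Nat.factorial d) * Real.pi ^ (⌊(0:ℝ) * d⌋₊) /
          (4 ^ (⌊(0:ℝ) * d⌋₊) * (Nat.factorial (d - ⌊(0:ℝ) * d⌋₊)) *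
            Real.Gamma ((⌊(0:ℝ) * d⌋₊ : ℝ) / 2 + 1) ^ 2)) := by
      filter_upwards [eventually_ge_atTop 1] with d hd
      have hd0 : (0:ℝ) < d := by exact_mod_cast hd
      have hfd : ((Nat.factorial d : ℝ)) ≠ 0 := by
        exact_mod_cast (Nat.factorial_pos d).ne'
      simp only [zero_mul, Nat.floor_zero, pow_zero, Nat.sub_zero, Nat.cast_zero, zero_div,
        zero_add, Real.Gamma_one, one_pow, mul_one, one_mul]
      rw [mul_div_assoc, div_self hfd, mul_one, Real.log_pow]
      field_simp
    exact Tendsto.congr' heq tendsto_const_nhds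
  · -- 0 < lam
    set j : ℕ → ℕ := fun d => ⌊lam * d⌋₊ with hjdef
    have hjle : ∀ d : ℕ, j d ≤ d := by
      intro d
      have : lam * d ≤ (d:ℝ) := mul_le_of_le_one_left (Nat.cast_nonneg d) hlam1
      calc j d ≤ ⌊(d:ℝ)⌋₊ := Nat.floor_mono this
        _ = d := Nat.floor_natCast d
    have hjtop : Tendsto j atTop atTop := tendsto_nat_floor_mul_atTop lam hpos
    have hratio : Tendsto (fun d : ℕ => (j d : ℝ) / d) atTop (𝓝 lam) :=
      (tendsto_nat_floor_mul_div_atTop hlam0).comp tendsto_natCast_atTop_atTop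
    -- error terms
    have E1 : Tendsto (fun d : ℕ => epsf d / d) atTop (𝓝 0) := tendsto_epsf_div
    have E2 : Tendsto (fun d : ℕ => epsf (j d) / d) atTop (𝓝 0) :=
      comp_div_zero _ tendsto_epsf_div j hjtop (Eventually.of_forall hjle)
    have E3 : Tendsto (fun d : ℕ => epsf (d - j d) / d) atTop (𝓝 0) := by
      rcases eq_or_lt_of_le hlam1 with h1 | h1
      · -- lam = 1 : j d = d
        have : ∀ d : ℕ, j d = d := by
          intro d; simp [hjdef, h1]
        simpa [this, epsf_zero] using tendsto_const_nhds (x := (0:ℝ)) (f := atTop (α := ℕ))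
      · -- lam < 1
        have hmono : Tendsto (fun d : ℕ => (d - j d : ℕ)) atTop atTop := by
          rw [← tendsto_natCast_atTop_iff (R := ℝ)]
          have hf1 : Tendsto (fun d : ℕ => (1 - lam) * (d:ℝ)) atTop atTop :=
            (tendsto_natCast_atTop_atTop (R := ℝ)).const_mul_atTop (by linarith)
          refine tendsto_atTop_mono' atTop ?_ hf1
          filter_upwards with d
          have h2 : (j d : ℝ) ≤ lam * d := Nat.floor_le (by positivity)
          have h3 : ((d - j d : ℕ) : ℝ) = (d:ℝ) - j d := by
            exact_mod_cast Nat.cast_sub (hjle d)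
          rw [h3]; nlinarith
        exact comp_div_zero _ tendsto_epsf_div _ hmono
          (Eventually.of_forall (fun d => Nat.sub_le d (j d)))
    have E4 : Tendsto (fun d : ℕ =>
        Real.log (Real.Gamma ((j d : ℝ)/2 + 1) / Real.Gamma ((j d : ℝ)/2 + 1/2)) / d)
        atTop (𝓝 0) := by
      have hlogd : Tendsto (fun d : ℕ => Real.log d / d) atTop (𝓝 0) :=
        Real.isLittleO_log_id_atTop.tendsto_div_nhds_zero.comp tendsto_natCast_atTop_atTop
      apply tendsto_of_tendsto_of_tendsto_of_le_of_le' tendsto_const_nhds hlogd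
      · filter_upwards [hjtop.eventually_ge_atTop 3, eventually_ge_atTop 1] with d h3 h1
        have hm : (3:ℝ) ≤ (j d : ℝ) := by exact_mod_cast h3
        have h05 : (0:ℝ) < (j d:ℝ)/2 + 1/2 := by positivity
        have hg05 := Real.Gamma_pos_of_pos h05
        have hR1 : (1:ℝ) ≤ Real.Gamma ((j d:ℝ)/2 + 1) / Real.Gamma ((j d:ℝ)/2 + 1/2) := by
          rw [le_div_iff₀ hg05, one_mul]
          apply Real.Gamma_strictMonoOn_Ici.monotoneOn
          · simp only [Set.mem_Ici]; linarith
          · simp only [Set.mem_Ici]; linarith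
          · linarith
        have hd0 : (0:ℝ) < d := by exact_mod_cast h1
        exact div_nonneg (Real.log_nonneg hR1) hd0.le
      · filter_upwards [hjtop.eventually_ge_atTop 3, eventually_ge_atTop 1] with d h3 h1
        have hm : (3:ℝ) ≤ (j d : ℝ) := by exact_mod_cast h3
        have hjd : (j d : ℝ) ≤ d := by exact_mod_cast hjle d
        have hd1 : (1:ℝ) ≤ d := by exact_mod_cast h1
        have h05 : (0:ℝ) < (j d:ℝ)/2 + 1/2 := by positivity
        have hg05 := Real.Gamma_pos_of_pos h05
        have hg1 := Real.Gamma_pos_of_pos (s := (j d:ℝ)/2 + 1) (by positivity)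
        have hR1 : (1:ℝ) ≤ Real.Gamma ((j d:ℝ)/2 + 1) / Real.Gamma ((j d:ℝ)/2 + 1/2) := by
          rw [le_div_iff₀ hg05, one_mul]
          apply Real.Gamma_strictMonoOn_Ici.monotoneOn
          · simp only [Set.mem_Ici]; linarith
          · simp only [Set.mem_Ici]; linarith
          · linarith
        have hup : Real.Gamma ((j d:ℝ)/2 + 1) ≤ ((j d:ℝ)/2 + 1/2) * Real.Gamma ((j d:ℝ)/2 + 1/2) := by
          have := Real.Gamma_add_one (s := (j d:ℝ)/2 + 1/2) h05.ne'
          have heq : (j d:ℝ)/2 + 1/2 + 1 = (j d:ℝ)/2 + 3/2 := by ring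
          rw [heq] at this
          rw [← this]
          apply Real.Gamma_strictMonoOn_Ici.monotoneOn
          · simp only [Set.mem_Ici]; linarith
          · simp only [Set.mem_Ici]; linarith
          · linarith
        have hRle : Real.Gamma ((j d:ℝ)/2 + 1) / Real.Gamma ((j d:ℝ)/2 + 1/2) ≤ (d:ℝ) := by
          rw [div_le_iff₀ hg05]
          calc Real.Gamma ((j d:ℝ)/2 + 1) ≤ ((j d:ℝ)/2 + 1/2) * Real.Gamma ((j d:ℝ)/2 + 1/2) := hup
            _ ≤ (d:ℝ) * Real.Gamma ((j d:ℝ)/2 + 1/2) := by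
                apply mul_le_mul_of_nonneg_right _ hg05.le
                linarith
        have hd0 : (0:ℝ) < d := by exact_mod_cast h1
        have hlog2 : Real.log (Real.Gamma ((j d:ℝ)/2 + 1) / Real.Gamma ((j d:ℝ)/2 + 1/2))
            ≤ Real.log d := Real.log_le_log (by linarith) hRle
        gcongr
    have E5 : Tendsto (fun d : ℕ => ((1:ℝ)/2 * Real.log π) / d) atTop (𝓝 0) :=
      tendsto_const_div_atTop_nhds_zero_nat _
    have Etot : Tendsto (fun d : ℕ =>
        (epsf d - epsf (j d) - epsf (d - j d)
          - Real.log (Real.Gamma ((j d : ℝ)/2 + 1) / Real.Gamma ((j d : ℝ)/2 + 1/2))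
          - 1/2 * Real.log π) / d) atTop (𝓝 0) := by
      have := ((((E1.sub E2).sub E3).sub E4).sub E5)
      simp only [sub_zero] at this
      apply this.congr
      intro d; ring
    -- the main limit in decomposed form
    have hmul : Tendsto (fun d : ℕ => ((j d:ℝ)/d) * Real.log ((j d:ℝ)/d)) atTop (𝓝 (lam * Real.log lam)) :=
      (Real.continuous_mul_log.tendsto lam).comp hratio
    have hmul2 : Tendsto (fun d : ℕ => (1 - (j d:ℝ)/d) * Real.log (1 - (j d:ℝ)/d)) atTop
        (𝓝 ((1 - lam) * Real.log (1 - lam))) :=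
      (Real.continuous_mul_log.tendsto (1 - lam)).comp (tendsto_const_nhds.sub hratio)
    have hG : Tendsto (fun d : ℕ =>
        Real.log 2 + ((j d:ℝ)/d) * (Real.log π - Real.log 2)
          - ((j d:ℝ)/d) * Real.log ((j d:ℝ)/d)
          - (1 - (j d:ℝ)/d) * Real.log (1 - (j d:ℝ)/d)
          + (epsf d - epsf (j d) - epsf (d - j d)
             - Real.log (Real.Gamma ((j d : ℝ)/2 + 1) / Real.Gamma ((j d : ℝ)/2 + 1/2))
             - 1/2 * Real.log π) / d) atTop
        (𝓝 (Real.log 2 + lam * (Real.log π - Real.log 2) - lam * Real.log lam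
             - (1 - lam) * Real.log (1 - lam) + 0)) := by
      exact ((((tendsto_const_nhds.add (hratio.mul tendsto_const_nhds)).sub hmul).sub hmul2).add Etot)
    rw [show Real.log 2 + lam * Real.log (π / 2) - lam * Real.log lam - (1 - lam) * Real.log (1 - lam)
        = Real.log 2 + lam * (Real.log π - Real.log 2) - lam * Real.log lam
          - (1 - lam) * Real.log (1 - lam) + 0 by
      rw [Real.log_div Real.pi_ne_zero two_ne_zero]; ring]
    apply hG.congr'
    -- pointwise identity
    filter_upwards [eventually_ge_atTop 1, hjtop.eventually_ge_atTop 1] with d hd1 hjd1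
    have hd0 : (0:ℝ) < d := by exact_mod_cast hd1
    have hj0 : (0:ℝ) < j d := by exact_mod_cast hjd1
    have hjdr : (j d : ℝ) ≤ d := by exact_mod_cast hjle d
    have hcast : ((d - j d : ℕ) : ℝ) = (d:ℝ) - j d := by exact_mod_cast Nat.cast_sub (hjle d)
    have hfd : (0:ℝ) < Nat.factorial d := by exact_mod_cast Nat.factorial_pos d
    have hfm : (0:ℝ) < Nat.factorial (d - j d) := by exact_mod_cast Nat.factorial_pos _
    have hg1 := Real.Gamma_pos_of_pos (s := (j d:ℝ)/2 + 1) (by positivity)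
    have h_log : Real.log ((2:ℝ) ^ d * (Nat.factorial d) * Real.pi ^ (j d) /
          (4 ^ (j d) * (Nat.factorial (d - j d)) * Real.Gamma ((j d : ℝ) / 2 + 1) ^ 2))
        = d * Real.log 2 + Real.log (Nat.factorial d) + (j d) * Real.log π
          - ((j d) * Real.log 4 + Real.log (Nat.factorial (d - j d))
             + 2 * Real.log (Real.Gamma ((j d : ℝ)/2 + 1))) := by
      rw [Real.log_div (by positivity) (by positivity),
        Real.log_mul (by positivity) (by positivity),
        Real.log_mul (by positivity) (by positivity),
        Real.log_mul (by positivity) (by positivity),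
        Real.log_mul (by positivity) (by positivity),
        Real.log_pow, Real.log_pow, Real.log_pow, Real.log_pow]
      push_cast
      ring
    have hgam := two_log_gamma (j d)
    have hed : Real.log (Nat.factorial d) = epsf d + d * Real.log d - d := by
      unfold epsf; ring
    have hek : Real.log (Nat.factorial (j d)) = epsf (j d) + (j d) * Real.log (j d) - (j d) := by
      unfold epsf; ring
    have hem : Real.log (Nat.factorial (d - j d))
        = epsf (d - j d) + ((d:ℝ) - j d) * Real.log ((d:ℝ) - j d) - ((d:ℝ) - j d) := by
      unfold epsf; rw [hcast]; ring
    have h4 : Real.log (4:ℝ) = 2 * Real.log 2 := by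
      rw [show (4:ℝ) = 2^2 by norm_num, Real.log_pow]; push_cast; ring
    have h6 : (j d : ℝ) * Real.log (j d) = (j d) * Real.log ((j d:ℝ)/d) + (j d) * Real.log d := by
      rw [Real.log_div hj0.ne' hd0.ne']; ring
    have h7 : ((d:ℝ) - j d) * Real.log ((d:ℝ) - j d)
        = ((d:ℝ) - j d) * Real.log (1 - (j d:ℝ)/d) + ((d:ℝ) - j d) * Real.log d := by
      rcases eq_or_lt_of_le hjdr with he | hlt
      · rw [← he]; simp
      · have hpos' : (0:ℝ) < (d:ℝ) - j d := by linarith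
        have : (1 - (j d:ℝ)/d) = ((d:ℝ) - j d) / d := by field_simp
        rw [this, Real.log_div hpos'.ne' hd0.ne']; ring
    rw [show (⌊lam * (d:ℕ)⌋₊ : ℕ) = j d from rfl] at *
    rw [h_log, hgam, hed, hek, hem, h4, h6, h7]
    field_simp
    ring
end

section
/- For every α > 0, as v → 0 (in ℂ within the strip 0 ≤ Re z ≤ π, along any path), ∫₀^v (sin z)^{α-1} dz = v^α/α + ((1-α)/(6(α+2))) v^{α+2} + O(v^{α+4}). -/
open Filter Real Asymptotics

private lemma aux_nonneg {f f' : ℝ → ℝ} (hd : ∀ x, HasDerivAt f (f' x) x)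
    (h0 : f 0 = 0) (hf' : ∀ x, 0 ≤ x → 0 ≤ f' x) : ∀ x, 0 ≤ x → 0 ≤ f x := by
  intro x hx
  have mono : MonotoneOn f (Set.Ici (0:ℝ)) := by
    apply monotoneOn_of_hasDerivWithinAt_nonneg (f' := f') (convex_Ici 0)
    · exact fun y _ => (hd y).continuousAt.continuousWithinAt
    · intro y hy
      exact (hd y).hasDerivWithinAt
    · intro y hy
      rw [interior_Ici] at hy
      exact hf' y (le_of_lt hy)
  have := mono (Set.self_mem_Ici) (Set.mem_Ici.2 hx) hx
  linarith [h0 ▸ this]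

private lemma sin_ge_poly (x : ℝ) (hx : 0 ≤ x) : x - x^3/6 ≤ Real.sin x := by
  have h := aux_nonneg (f := fun x => Real.sin x - x + x^3/6)
    (f' := fun x => Real.cos x - 1 + x^2/2) ?_ (by norm_num) ?_ x hx
  · linarith
  · intro y
    have h1 : HasDerivAt (fun x : ℝ => Real.sin x - x + x^3/6)
        (Real.cos y - 1 + (↑3 * y^(3-1))/6) y :=
      ((Real.hasDerivAt_sin y).sub (hasDerivAt_id y)).add ((hasDerivAt_pow 3 y).div_const 6)
    convert h1 using 1
    norm_num
    ring
  · intro y _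
    have := Real.one_sub_sq_div_two_le_cos (x := y)
    linarith

private lemma cos_le_poly (x : ℝ) (hx : 0 ≤ x) : Real.cos x ≤ 1 - x^2/2 + x^4/24 := by
  have h := aux_nonneg (f := fun x => 1 - x^2/2 + x^4/24 - Real.cos x)
    (f' := fun x => Real.sin x - x + x^3/6) ?_ (by norm_num) ?_ x hx
  · linarith
  · intro y
    have h1 : HasDerivAt (fun x : ℝ => 1 - x^2/2 + x^4/24 - Real.cos x)
        (0 - (↑2 * y^(2-1))/2 + (↑4 * y^(4-1))/24 - (-Real.sin y)) y :=
      (((hasDerivAt_const y (1:ℝ)).sub ((hasDerivAt_pow 2 y).div_const 2)).add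
        ((hasDerivAt_pow 4 y).div_const 24)).sub (Real.hasDerivAt_cos y)
    convert h1 using 1
    norm_num
    ring
  · intro y hy
    have := sin_ge_poly y hy
    linarith

private lemma sin_le_poly (x : ℝ) (hx : 0 ≤ x) : Real.sin x ≤ x - x^3/6 + x^5/120 := by
  have h := aux_nonneg (f := fun x => x - x^3/6 + x^5/120 - Real.sin x)
    (f' := fun x => 1 - x^2/2 + x^4/24 - Real.cos x) ?_ (by norm_num) ?_ x hx
  · linarith
  · intro y
    have h1 : HasDerivAt (fun x : ℝ => x - x^3/6 + x^5/120 - Real.sin x)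
        (1 - (↑3 * y^(3-1))/6 + (↑5 * y^(5-1))/120 - Real.cos y) y :=
      (((hasDerivAt_id y).sub ((hasDerivAt_pow 3 y).div_const 6)).add
        ((hasDerivAt_pow 5 y).div_const 120)).sub (Real.hasDerivAt_sin y)
    convert h1 using 1
    norm_num
    ring
  · intro y hy
    have := cos_le_poly y hy
    linarith

private lemma rpow_taylor (p : ℝ) : ∃ K : ℝ, 0 ≤ K ∧
    ∀ u ∈ Set.Icc (1/2:ℝ) 1, |u ^ p - 1 - p * (u - 1)| ≤ K * (u - 1)^2 := by
  set B := max 1 ((1/2:ℝ) ^ (p-2)) with hBdef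
  have hB : 0 ≤ B := le_trans zero_le_one (le_max_left _ _)
  have hL : ∀ t ∈ Set.Icc (1/2:ℝ) 1, |t ^ (p-1) - 1| ≤ (|p-1| * B) * (1 - t) := by
    intro t ht
    have key := Convex.norm_image_sub_le_of_norm_hasDerivWithin_le
      (f := fun s : ℝ => s ^ (p-1)) (f' := fun s : ℝ => (p-1) * s ^ (p-1-1))
      (s := Set.Icc (1/2:ℝ) 1) (C := |p-1| * B)
      (fun s hs => (Real.hasDerivAt_rpow_const
        (Or.inl (ne_of_gt (lt_of_lt_of_le (by norm_num) hs.1)))).hasDerivWithinAt)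
      ?_ (convex_Icc _ _) (Set.mem_Icc.2 ⟨by norm_num, le_refl 1⟩) ht
    · simp only [Real.one_rpow] at key
      have : ‖t - 1‖ = 1 - t := by
        rw [Real.norm_eq_abs, abs_of_nonpos (by linarith [ht.2])]; ring
      rw [this] at key
      calc |t ^ (p-1) - 1| = ‖t ^ (p-1) - 1‖ := rfl
        _ ≤ |p-1| * B * (1 - t) := key
    · intro s hs
      have hs0 : (0:ℝ) < s := lt_of_lt_of_le (by norm_num) hs.1
      have hpow : s ^ (p-1-1) ≤ B := by
        rcases le_or_gt 0 (p-1-1) with h | h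
        · exact le_trans (Real.rpow_le_one hs0.le hs.2 h) (le_max_left _ _)
        · have : s ^ (p-1-1) ≤ (1/2:ℝ) ^ (p-1-1) :=
            Real.rpow_le_rpow_of_nonpos (by norm_num) hs.1 h.le
          refine le_trans this ?_
          have : p - 1 - 1 = p - 2 := by ring
          rw [this]
          exact le_max_right _ _
      rw [Real.norm_eq_abs, abs_mul, abs_of_nonneg (Real.rpow_nonneg hs0.le _)]
      exact mul_le_mul_of_nonneg_left hpow (abs_nonneg _)
  refine ⟨|p| * (|p-1| * B), by positivity, ?_⟩
  intro u hu
  have key := Convex.norm_image_sub_le_of_norm_hasDerivWithin_le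
    (f := fun s : ℝ => s ^ p - p * s) (f' := fun s : ℝ => p * s ^ (p-1) - p * 1)
    (s := Set.Icc u 1) (C := |p| * (|p-1| * B) * (1 - u))
    (fun s hs => ((Real.hasDerivAt_rpow_const
        (Or.inl (ne_of_gt (lt_of_lt_of_le (lt_of_lt_of_le (by norm_num) hu.1) hs.1)))).sub
      ((hasDerivAt_id s).const_mul p)).hasDerivWithinAt)
    ?_ (convex_Icc _ _) (Set.mem_Icc.2 ⟨hu.2, le_refl 1⟩) (Set.mem_Icc.2 ⟨le_refl u, hu.2⟩)
  · have e1 : (fun s : ℝ => s ^ p - p * s) u - (fun s : ℝ => s ^ p - p * s) 1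
        = u ^ p - 1 - p * (u - 1) := by
      simp only [Real.one_rpow]; ring
    rw [e1] at key
    have e2 : ‖u - 1‖ = 1 - u := by
      rw [Real.norm_eq_abs, abs_of_nonpos (by linarith [hu.2])]; ring
    rw [e2] at key
    calc |u ^ p - 1 - p * (u - 1)| = ‖u ^ p - 1 - p * (u - 1)‖ := rfl
      _ ≤ |p| * (|p-1| * B) * (1 - u) * (1 - u) := key
      _ = |p| * (|p-1| * B) * (u - 1)^2 := by ring
  · intro s hs
    have hs' : s ∈ Set.Icc (1/2:ℝ) 1 := ⟨le_trans hu.1 hs.1, hs.2⟩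
    have h1 : ‖p * s ^ (p-1) - p * 1‖ = |p| * |s ^ (p-1) - 1| := by
      rw [Real.norm_eq_abs, ← abs_mul]; ring_nf
    rw [h1]
    calc |p| * |s ^ (p-1) - 1| ≤ |p| * ((|p-1| * B) * (1 - s)) :=
          mul_le_mul_of_nonneg_left (hL s hs') (abs_nonneg _)
      _ ≤ |p| * ((|p-1| * B) * (1 - u)) := by
          have h2 : 1 - s ≤ 1 - u := by linarith [hs.1]
          have : (|p-1| * B) * (1 - s) ≤ (|p-1| * B) * (1 - u) :=
            mul_le_mul_of_nonneg_left h2 (by positivity)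
          exact mul_le_mul_of_nonneg_left this (abs_nonneg _)
      _ = |p| * (|p-1| * B) * (1 - u) := by ring

private lemma pointwise_bound (α : ℝ) (hα : 0 < α) : ∃ C : ℝ, 0 ≤ C ∧
    ∀ z ∈ Set.Ioc (0:ℝ) (1/2),
      |Real.sin z ^ (α-1) - z ^ (α-1) + ((α-1)/6) * z ^ (α+1)| ≤ C * z ^ (α+3) := by
  obtain ⟨K, hK0, hK⟩ := rpow_taylor (α-1)
  refine ⟨K + |α-1|, by positivity, ?_⟩
  intro z hz
  obtain ⟨hz0, hz2⟩ := hz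
  set u := Real.sin z / z with hu_def
  have hzsq : z^2 ≤ 1/4 := by nlinarith
  have hsin_lb := sin_ge_poly z hz0.le
  have hsin_ub := sin_le_poly z hz0.le
  have hu_le : u ≤ 1 := (div_le_one hz0).2 (Real.sin_le hz0.le)
  have hu_ge : (1/2:ℝ) ≤ u := by
    rw [hu_def, le_div_iff₀ hz0]
    nlinarith
  have hnear : |u - (1 - z^2/6)| ≤ z^4/120 := by
    have h1 : u - (1 - z^2/6) = (Real.sin z - (z - z^3/6)) / z := by
      field_simp [hu_def]
      rw [hu_def]; field_simp
    rw [h1, abs_div, abs_of_pos hz0, div_le_iff₀ hz0]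
    have h2 : |Real.sin z - (z - z^3/6)| ≤ z^5/120 :=
      abs_le.2 ⟨by linarith, by linarith⟩
    nlinarith [abs_nonneg (Real.sin z - (z - z^3/6))]
  have hnear' := abs_le.1 hnear
  have hu_abs : |u - 1| ≤ z^2 := abs_le.2 ⟨by nlinarith, by nlinarith⟩
  have hu_abs' := abs_le.1 hu_abs
  have htaylor := hK u ⟨hu_ge, hu_le⟩
  have hsq : (u - 1)^2 ≤ z^4 := by nlinarith
  have hT : |u ^ (α-1) - 1 + ((α-1)/6) * z^2| ≤ (K + |α-1|) * z^4 := by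
    have decomp : u ^ (α-1) - 1 + ((α-1)/6) * z^2
        = (u ^ (α-1) - 1 - (α-1) * (u - 1)) + (α-1) * (u - (1 - z^2/6)) := by ring
    rw [decomp]
    calc |(u ^ (α-1) - 1 - (α-1) * (u - 1)) + (α-1) * (u - (1 - z^2/6))|
        ≤ |u ^ (α-1) - 1 - (α-1) * (u - 1)| + |(α-1) * (u - (1 - z^2/6))| := abs_add_le _ _
      _ ≤ K * (u-1)^2 + |α-1| * (z^4/120) := by
          refine add_le_add htaylor ?_
          rw [abs_mul]
          exact mul_le_mul_of_nonneg_left hnear (abs_nonneg _)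
      _ ≤ (K + |α-1|) * z^4 := by nlinarith [abs_nonneg (α-1), mul_le_mul_of_nonneg_left hsq hK0]
  have hu0 : (0:ℝ) ≤ u := by linarith
  have hfact : Real.sin z ^ (α-1) = z ^ (α-1) * u ^ (α-1) := by
    rw [hu_def, ← Real.mul_rpow hz0.le (by positivity : (0:ℝ) ≤ Real.sin z / z),
      mul_div_cancel₀ _ hz0.ne']
  have hz_a1 : z ^ (α+1) = z ^ (α-1) * z^2 := by
    rw [show α+1 = (α-1)+2 by ring, Real.rpow_add hz0,
      show (2:ℝ) = ((2:ℕ):ℝ) by norm_num, Real.rpow_natCast]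
  have hz_a3 : z ^ (α+3) = z ^ (α-1) * z^4 := by
    rw [show α+3 = (α-1)+4 by ring, Real.rpow_add hz0,
      show (4:ℝ) = ((4:ℕ):ℝ) by norm_num, Real.rpow_natCast]
  have hmain : Real.sin z ^ (α-1) - z ^ (α-1) + ((α-1)/6) * z ^ (α+1)
      = z ^ (α-1) * (u ^ (α-1) - 1 + ((α-1)/6) * z^2) := by
    rw [hfact, hz_a1]; ring
  rw [hmain, abs_mul, abs_of_nonneg (Real.rpow_nonneg hz0.le _), hz_a3]
  calc z ^ (α-1) * |u ^ (α-1) - 1 + ((α-1)/6) * z^2|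
      ≤ z ^ (α-1) * ((K + |α-1|) * z^4) :=
        mul_le_mul_of_nonneg_left hT (Real.rpow_nonneg hz0.le _)
    _ = (K + |α-1|) * (z ^ (α-1) * z^4) := by ring

theorem stmt_13 (α : ℝ) (hα : 0 < α) :
    (fun v : ℝ =>
        (∫ z in (0:ℝ)..v, Real.sin z ^ (α - 1)) -
          (v ^ α / α + ((1 - α) / (6 * (α + 2))) * v ^ (α + 2)))
      =O[nhdsWithin 0 (Set.Ioi 0)] (fun v : ℝ => v ^ (α + 4)) := by
  obtain ⟨C, hC0, hC⟩ := pointwise_bound α hα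
  rw [isBigO_iff]
  refine ⟨C, ?_⟩
  filter_upwards [Ioc_mem_nhdsGT_of_mem
    (Set.mem_Ico.2 ⟨le_refl (0:ℝ), by norm_num⟩ : (0:ℝ) ∈ Set.Ico (0:ℝ) (1/2))] with v hv
  obtain ⟨hv0, hv2⟩ := hv
  set g : ℝ → ℝ := fun z => Real.sin z ^ (α-1) - z ^ (α-1) + ((α-1)/6) * z ^ (α+1) with hg_def
  have i1 : IntervalIntegrable (fun z : ℝ => z ^ (α-1)) MeasureTheory.volume 0 v :=
    intervalIntegral.intervalIntegrable_rpow' (by linarith)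
  have i2 : IntervalIntegrable (fun z : ℝ => z ^ (α+1)) MeasureTheory.volume 0 v :=
    intervalIntegral.intervalIntegrable_rpow' (by linarith)
  have i3 : IntervalIntegrable (fun z : ℝ => z ^ (α+3)) MeasureTheory.volume 0 v :=
    intervalIntegral.intervalIntegrable_rpow' (by linarith)
  have i3' : IntervalIntegrable (fun z : ℝ => C * z ^ (α+3)) MeasureTheory.volume 0 v :=
    i3.const_mul C
  have huIoc : Set.uIoc (0:ℝ) v = Set.Ioc 0 v := Set.uIoc_of_le hv0.le
  have meas_g : MeasureTheory.AEStronglyMeasurable g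
      (MeasureTheory.volume.restrict (Set.uIoc (0:ℝ) v)) := by
    rw [huIoc]
    have hπ : v < Real.pi := lt_of_le_of_lt hv2 (by linarith [Real.pi_gt_three])
    have c1 : ContinuousOn (fun z : ℝ => Real.sin z ^ (α-1)) (Set.Ioc 0 v) := by
      apply ContinuousOn.rpow_const Real.continuous_sin.continuousOn
      intro x hx
      exact Or.inl (ne_of_gt (Real.sin_pos_of_pos_of_lt_pi hx.1 (lt_of_le_of_lt hx.2 hπ)))
    have c2 : ContinuousOn (fun z : ℝ => z ^ (α-1)) (Set.Ioc 0 v) :=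
      continuousOn_id.rpow_const fun x hx => Or.inl (ne_of_gt hx.1)
    have c3 : ContinuousOn (fun z : ℝ => z ^ (α+1)) (Set.Ioc 0 v) :=
      continuousOn_id.rpow_const fun x hx => Or.inl (ne_of_gt hx.1)
    exact ((c1.sub c2).add (continuousOn_const.mul c3)).aestronglyMeasurable measurableSet_Ioc
  have hbound_ae : ∀ᵐ t ∂(MeasureTheory.volume.restrict (Set.uIoc (0:ℝ) v)),
      ‖g t‖ ≤ C * t ^ (α+3) := by
    rw [huIoc]
    rw [MeasureTheory.ae_restrict_iff' measurableSet_Ioc]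
    refine MeasureTheory.ae_of_all _ fun t ht => ?_
    rw [Real.norm_eq_abs]
    exact hC t ⟨ht.1, le_trans ht.2 hv2⟩
  have int_g : IntervalIntegrable g MeasureTheory.volume 0 v := by
    refine i3'.mono_fun meas_g ?_
    refine hbound_ae.mono fun t ht => le_trans ht ?_
    exact le_abs_self _
  have hsin_eq : (fun z : ℝ => Real.sin z ^ (α-1))
      = fun z => g z + z ^ (α-1) - ((α-1)/6) * z ^ (α+1) := by
    funext z; rw [hg_def]; ring
  have int_sin : IntervalIntegrable (fun z : ℝ => Real.sin z ^ (α-1))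
      MeasureTheory.volume 0 v := by
    rw [hsin_eq]
    exact (int_g.add i1).sub (i2.const_mul _)
  have e1 : (∫ z in (0:ℝ)..v, z ^ (α-1)) = v ^ α / α := by
    rw [integral_rpow (Or.inl (by linarith : (-1:ℝ) < α - 1)),
      show α - 1 + 1 = α by ring, Real.zero_rpow hα.ne']
    ring
  have e2 : (∫ z in (0:ℝ)..v, z ^ (α+1)) = v ^ (α+2) / (α+2) := by
    rw [integral_rpow (Or.inl (by linarith : (-1:ℝ) < α + 1)),
      show α + 1 + 1 = α + 2 by ring, Real.zero_rpow (by linarith : α + 2 ≠ 0)]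
    ring
  have e3 : (∫ z in (0:ℝ)..v, C * z ^ (α+3)) = C * (v ^ (α+4) / (α+4)) := by
    rw [intervalIntegral.integral_const_mul,
      integral_rpow (Or.inl (by linarith : (-1:ℝ) < α + 3)),
      show α + 3 + 1 = α + 4 by ring, Real.zero_rpow (by linarith : α + 4 ≠ 0)]
    ring
  have split : (∫ z in (0:ℝ)..v, Real.sin z ^ (α-1))
      = (∫ z in (0:ℝ)..v, g z) + v ^ α / α - ((α-1)/6) * (v ^ (α+2) / (α+2)) := by
    rw [hsin_eq, intervalIntegral.integral_sub (int_g.add i1) (i2.const_mul _),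
      intervalIntegral.integral_add int_g i1, intervalIntegral.integral_const_mul, e1, e2]
  have hLHS : (∫ z in (0:ℝ)..v, Real.sin z ^ (α-1)) -
      (v ^ α / α + ((1 - α) / (6 * (α + 2))) * v ^ (α + 2))
      = ∫ z in (0:ℝ)..v, g z := by
    rw [split]
    have h2 : (0:ℝ) < α + 2 := by linarith
    field_simp
    ring
  rw [hLHS]
  have hnorm := intervalIntegral.norm_integral_le_abs_of_norm_le hbound_ae i3'
  rw [e3] at hnorm
  have h4 : (0:ℝ) < α + 4 := by linarith
  have hvpow : (0:ℝ) ≤ v ^ (α+4) := Real.rpow_nonneg hv0.le _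
  have habs : |C * (v ^ (α+4) / (α+4))| = C * (v ^ (α+4) / (α+4)) := by
    rw [abs_of_nonneg]; positivity
  rw [habs] at hnorm
  refine le_trans hnorm ?_
  rw [Real.norm_eq_abs, abs_of_nonneg hvpow]
  have : v ^ (α+4) / (α+4) ≤ v ^ (α+4) := by
    rw [div_le_iff₀ h4]
    nlinarith
  nlinarith
end

section
/- Define B{n,k} = (1/((k-1)!(n-k)!)) ∫₀^π (sin x)^{k-1} x^{n-k} dx for integers 1 ≤ k ≤ n. For fixed nonnegative integers ℓ and j with 0 ≤ j ≤ ℓ, as d → ∞, B{d+ℓ+1, d+j+1} ~ (1/((d+j)!·(ℓ-j)!)) · (π/2)^{ℓ-j} · √(2π/d). -/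
open Filter Real MeasureTheory intervalIntegral

noncomputable def cc (n : ℕ) : ℝ := ∫ x in (0:ℝ)..π, sin x ^ n

lemma cc_pos (n : ℕ) : 0 < cc n := integral_sin_pow_pos n

lemma cc_succ_le (n : ℕ) : cc (n+1) ≤ cc n := integral_sin_pow_succ_le n

lemma cc_rec (n : ℕ) : cc (n+2) = (n+1)/(n+2) * cc n := by
  unfold cc
  rw [integral_sin_pow]
  simp [Real.sin_pi]

lemma cc_mul (n : ℕ) : cc n * cc (n+1) = 2 * π / (n+1) := by
  induction n with
  | zero =>
    have h0 : cc 0 = π := by simp [cc]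
    have h1 : cc 1 = 2 := by
      simp [cc, integral_sin]; norm_num
    rw [h0, h1]; norm_num [mul_comm]
  | succ n ih =>
    have := cc_rec n
    rw [this]
    have hpos : (0:ℝ) < (n:ℝ) + 2 := by positivity
    push_cast
    rw [show cc (n+1) * ((n+1)/(n+2) * cc n) = ((n:ℝ)+1)/(n+2) * (cc n * cc (n+1)) by ring, ih]
    push_cast
    field_simp
    ring


lemma cc_sq_le (n : ℕ) (hn : 1 ≤ n) : cc n ^ 2 ≤ 2 * π / n := by
  obtain ⟨m, rfl⟩ := Nat.exists_eq_add_of_le hn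
  have h := cc_mul m
  have h2 := cc_succ_le m
  have h3 := (cc_pos (m+1)).le
  calc cc (1+m) ^ 2 = cc (m+1) * cc (m+1) := by rw [sq, Nat.add_comm]
    _ ≤ cc m * cc (m+1) := by nlinarith
    _ = 2 * π / ((1+m:ℕ):ℝ) := by rw [h]; push_cast; ring_nf

lemma le_cc_sq (n : ℕ) : 2 * π / (n+1) ≤ cc n ^ 2 := by
  have h := cc_mul n
  have h2 := cc_succ_le n
  have h3 := (cc_pos n).le
  nlinarith [cc_pos (n+1)]

lemma cc_tendsto : Tendsto (fun n : ℕ => cc n / Real.sqrt (2*π/n)) atTop (nhds 1) := by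
  have hlow : Tendsto (fun n : ℕ => Real.sqrt ((2*π/(n+1)) / (2*π/n))) atTop (nhds 1) := by
    have h1 : Tendsto (fun n : ℕ => (2*π/((n:ℝ)+1)) / (2*π/n)) atTop (nhds 1) := by
      have := tendsto_natCast_div_add_atTop (1:ℝ)
      apply this.congr'
      filter_upwards [eventually_ge_atTop 1] with n hn
      have hn0 : (0:ℝ) < n := by exact_mod_cast hn
      field_simp
    have := (Real.continuous_sqrt.tendsto 1).comp h1
    rw [Real.sqrt_one] at this
    exact this
  apply tendsto_of_tendsto_of_tendsto_of_le_of_le' hlow tendsto_const_nhds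
  · filter_upwards [eventually_ge_atTop 1] with n hn
    have hn0 : (0:ℝ) < n := by exact_mod_cast hn
    have hs : (0:ℝ) < Real.sqrt (2*π/n) := Real.sqrt_pos.2 (by positivity)
    rw [Real.sqrt_div (by positivity : (0:ℝ) ≤ 2*π/((n:ℝ)+1))]
    gcongr
    exact (Real.sqrt_le_sqrt (le_cc_sq n)).trans_eq (Real.sqrt_sq (cc_pos n).le)
  · filter_upwards [eventually_ge_atTop 1] with n hn
    have hn0 : (0:ℝ) < n := by exact_mod_cast hn
    have hs : (0:ℝ) < Real.sqrt (2*π/n) := Real.sqrt_pos.2 (by positivity)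
    rw [div_le_one hs]
    exact (Real.le_sqrt (cc_pos n).le (by positivity)).2 (cc_sq_le n hn)

noncomputable def MM (n i : ℕ) : ℝ := ∫ x in (0:ℝ)..π, sin x ^ n * (x - π/2) ^ i


lemma MM_zero (n : ℕ) : MM n 0 = cc n := by simp [MM, cc]

lemma MM_odd (n i : ℕ) (h : Odd i) : MM n i = 0 := by
  have hfun : ∀ x : ℝ, sin (π - x) ^ n * ((π - x) - π/2)^i = -(sin x ^ n * (x - π/2)^i) := by
    intro x
    rw [Real.sin_pi_sub, show π - x - π/2 = -(x-π/2) by ring, h.neg_pow]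
    ring
  have h2 : (∫ x in (0:ℝ)..π, sin (π - x) ^ n * ((π - x) - π/2)^i) = MM n i := by
    rw [intervalIntegral.integral_comp_sub_left (fun y => sin y ^ n * (y - π/2)^i) π]
    simp [MM]
  have h3 : (∫ x in (0:ℝ)..π, sin (π - x) ^ n * ((π - x) - π/2)^i) = - MM n i := by
    simp only [hfun]
    rw [intervalIntegral.integral_neg]
    rfl
  have := h2.symm.trans h3
  linarith

lemma MM_bound (n m : ℕ) (hm : m ≤ n/2) : |MM n (2*m)| ≤ π / (Nat.choose (n/2) m) := by
  set q := n / 2 with hq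
  have key : ∀ x ∈ Set.uIoc (0:ℝ) π, ‖sin x ^ n * (x - π/2)^(2*m)‖ ≤ 1 / (Nat.choose q m) := by
    intro x hx
    rw [Set.uIoc_of_le pi_pos.le] at hx
    have hsin : sin x = Real.cos (x - π/2) := by
      rw [← Real.sin_add_pi_div_two (x - π/2)]
      ring_nf
    set t := x - π/2 with ht
    have ht1 : -(π/2) ≤ t := by rw [ht]; linarith [hx.1.le]
    have ht2 : t ≤ π/2 := by rw [ht]; linarith [hx.2]
    have hc0 : 0 ≤ Real.cos t := Real.cos_nonneg_of_mem_Icc ⟨ht1, ht2⟩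
    have hc1 : Real.cos t ≤ 1 := Real.cos_le_one t
    have hcsq : Real.cos t ^ 2 ≤ 1 / (1 + t^2) := by
      have h := Real.cos_le_one_div_sqrt_sq_add_one (by linarith [pi_pos] : -(3*π/2) ≤ t)
        (by linarith [pi_pos] : t ≤ 3*π/2)
      have h2 : Real.cos t ^ 2 ≤ (1 / Real.sqrt (t^2+1))^2 := pow_le_pow_left₀ hc0 h 2
      refine h2.trans_eq ?_
      rw [div_pow, one_pow, Real.sq_sqrt (by positivity)]
      ring_nf
    have hq2 : 2 * q ≤ n := by omega
    have hbin : (Nat.choose q m : ℝ) * (t^2)^m ≤ (t^2 + 1)^q := by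
      rw [add_pow]
      have hmem : m ∈ Finset.range (q+1) := Finset.mem_range.2 (by omega)
      calc (Nat.choose q m : ℝ) * (t^2)^m = (t^2)^m * 1^(q-m) * (Nat.choose q m) := by ring
        _ ≤ ∑ i ∈ Finset.range (q+1), (t^2)^i * 1^(q-i) * (Nat.choose q i) :=
          Finset.single_le_sum (f := fun i => (t^2)^i * 1^(q-i) * ((Nat.choose q i : ℕ) : ℝ)) (fun i _ => by positivity) hmem
    have hchoose : (0:ℝ) < (Nat.choose q m : ℝ) := by exact_mod_cast Nat.choose_pos hm
    have h1t : (0:ℝ) < (1 + t^2)^q := by positivity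
    have hsx : 0 ≤ sin x := Real.sin_nonneg_of_nonneg_of_le_pi hx.1.le hx.2
    have hnorm : ‖sin x ^ n * t^(2*m)‖ = sin x ^ n * t^(2*m) := by
      rw [Real.norm_eq_abs, abs_of_nonneg (mul_nonneg (pow_nonneg hsx n) (by rw [pow_mul]; positivity))]
    rw [hnorm]
    calc sin x ^ n * t^(2*m) = Real.cos t ^ n * t^(2*m) := by rw [hsin]
      _ ≤ Real.cos t ^ (2*q) * t^(2*m) :=
        mul_le_mul_of_nonneg_right (pow_le_pow_of_le_one hc0 hc1 hq2) (by rw [pow_mul]; positivity)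
      _ = (Real.cos t^2)^q * t^(2*m) := by rw [← pow_mul]
      _ ≤ (1/(1+t^2))^q * t^(2*m) :=
        mul_le_mul_of_nonneg_right (pow_le_pow_left₀ (by positivity) hcsq q) (by rw [pow_mul]; positivity)
      _ = t^(2*m) / (1+t^2)^q := by rw [div_pow, one_pow]; ring
      _ ≤ 1 / (Nat.choose q m) := by
        rw [div_le_div_iff₀ h1t hchoose, one_mul]
        calc t^(2*m) * (Nat.choose q m : ℝ) = (Nat.choose q m : ℝ) * (t^2)^m := by
              rw [pow_mul]; ring
          _ ≤ (t^2+1)^q := hbin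
          _ = (1+t^2)^q := by ring_nf
  calc |MM n (2*m)| ≤ 1 / (Nat.choose q m) * |π - 0| := by
        unfold MM; exact_mod_cast intervalIntegral.norm_integral_le_of_norm_le_const key
    _ = π / (Nat.choose q m) := by rw [sub_zero, abs_of_pos pi_pos]; ring


lemma MM_div_tendsto (i : ℕ) :
    Tendsto (fun n : ℕ => MM n i / Real.sqrt (2*π/n)) atTop (nhds (if i = 0 then 1 else 0)) := by
  rcases Nat.even_or_odd i with he | ho
  · obtain ⟨m, rfl⟩ := he
    rcases Nat.eq_zero_or_pos m with rfl | hm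
    · simpa [MM_zero] using cc_tendsto
    · rw [show m + m = 2 * m by omega]
      have hne : ¬ (2 * m = 0) := by omega
      simp only [hne, if_false]
      rw [tendsto_zero_iff_abs_tendsto_zero]
      apply squeeze_zero'
        (g := fun n : ℕ => 8 * π * (Nat.factorial m) * Real.sqrt ((n:ℝ)⁻¹))
      · exact Eventually.of_forall fun n => abs_nonneg _
      · filter_upwards [eventually_ge_atTop (8*m+8)] with n hn
        have hmn : m ≤ n / 2 := by omega
        have hMb : |MM n (2*m)| ≤ π / (Nat.choose (n/2) m) := MM_bound n m hmn
        have hn0 : (0:ℝ) < n := by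
          have : 0 < n := by omega
          exact_mod_cast this
        have hch : (0:ℝ) < (Nat.choose (n/2) m : ℝ) := by
          exact_mod_cast Nat.choose_pos hmn
        -- n ≤ 8 * choose (n/2) m * m!
        have hnat : n ≤ 8 * (Nat.choose (n/2) m * Nat.factorial m) := by
          have h1 : Nat.choose (n/2) m * Nat.factorial m = Nat.descFactorial (n/2) m := by
            rw [Nat.descFactorial_eq_factorial_mul_choose]; ring
          have h2 : (n/2 + 1 - m) ≤ Nat.descFactorial (n/2) m := by
            calc n/2 + 1 - m ≤ (n/2 + 1 - m)^m := Nat.le_self_pow (by omega) _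
              _ ≤ Nat.descFactorial (n/2) m := Nat.pow_sub_le_descFactorial _ _
          have h3 : n ≤ 8 * (n/2 + 1 - m) := by omega
          calc n ≤ 8 * (n/2 + 1 - m) := h3
            _ ≤ 8 * Nat.descFactorial (n/2) m := by omega
            _ = 8 * (Nat.choose (n/2) m * Nat.factorial m) := by rw [h1]
        have hreal : (n:ℝ) ≤ 8 * ((Nat.choose (n/2) m : ℝ) * (Nat.factorial m : ℝ)) := by
          exact_mod_cast hnat
        have hS : (0:ℝ) < Real.sqrt (2*π/n) := Real.sqrt_pos.2 (by positivity)
        have hSn : 0 < Real.sqrt (n:ℝ) := Real.sqrt_pos.2 hn0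
        have hinvS : 1 / Real.sqrt (2*π/n) ≤ Real.sqrt (n:ℝ) := by
          have h4 : ((n:ℝ))⁻¹ ≤ 2*π/n := by
            rw [div_eq_mul_inv]
            nlinarith [pi_gt_three, (inv_pos.2 hn0)]
          have h5 : Real.sqrt ((n:ℝ)⁻¹) ≤ Real.sqrt (2*π/n) := Real.sqrt_le_sqrt h4
          rw [Real.sqrt_inv] at h5
          rw [div_le_iff₀ hS]
          calc (1:ℝ) = (Real.sqrt (n:ℝ))⁻¹ * Real.sqrt (n:ℝ) := by
                rw [inv_mul_cancel₀ hSn.ne']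
            _ ≤ Real.sqrt (2*π/n) * Real.sqrt (n:ℝ) := by
                apply mul_le_mul_of_nonneg_right h5 hSn.le
            _ = Real.sqrt (n:ℝ) * Real.sqrt (2*π/n) := by ring
        have habs : |MM n (2*m) / Real.sqrt (2*π/n)| = |MM n (2*m)| * (1 / Real.sqrt (2*π/n)) := by
          rw [abs_div, abs_of_pos hS, div_eq_mul_one_div]
        simp only [Function.comp_apply]
        rw [habs]
        calc |MM n (2*m)| * (1 / Real.sqrt (2*π/n))
            ≤ (π / (Nat.choose (n/2) m)) * Real.sqrt (n:ℝ) := by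
              apply mul_le_mul hMb hinvS (by positivity) (by positivity)
          _ ≤ (8 * π * (Nat.factorial m) / n) * Real.sqrt (n:ℝ) := by
              apply mul_le_mul_of_nonneg_right ?_ hSn.le
              rw [div_le_div_iff₀ hch hn0]
              nlinarith [pi_pos]
          _ = 8 * π * (Nat.factorial m) * (Real.sqrt (n:ℝ) / n) := by ring
          _ = 8 * π * (Nat.factorial m) * Real.sqrt ((n:ℝ)⁻¹) := by
              rw [Real.sqrt_div_self', Real.sqrt_inv, one_div]
      · have h0 : Tendsto (fun n : ℕ => Real.sqrt ((n:ℝ)⁻¹)) atTop (nhds 0) := by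
          have h1 := (Real.continuous_sqrt.tendsto 0).comp tendsto_inv_atTop_nhds_zero_nat
          rw [Real.sqrt_zero] at h1
          exact h1
        have h2 := Tendsto.const_mul (8 * π * (Nat.factorial m : ℝ)) h0
        simpa using h2
  · have hne : ¬ (i = 0) := by rcases ho with ⟨m, hm⟩; omega
    simp only [hne, if_false]
    simp only [MM_odd _ _ ho, zero_div]
    exact tendsto_const_nhds


lemma II_eq (n k : ℕ) : (∫ x in (0:ℝ)..π, sin x ^ n * x ^ k) =
    ∑ i ∈ Finset.range (k+1), (Nat.choose k i : ℝ) * (π/2)^(k-i) * MM n i := by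
  have hpt : ∀ x : ℝ, sin x ^ n * x ^ k =
      ∑ i ∈ Finset.range (k+1),
        (Nat.choose k i : ℝ) * (π/2)^(k-i) * (sin x ^ n * (x - π/2)^i) := by
    intro x
    rw [show x ^ k = ((x - π/2) + π/2)^k by rw [sub_add_cancel], add_pow, Finset.mul_sum]
    refine Finset.sum_congr rfl fun i _ => by ring
  simp only [hpt]
  rw [intervalIntegral.integral_finset_sum]
  · exact Finset.sum_congr rfl fun i _ => intervalIntegral.integral_const_mul _ _
  · intro i _
    apply Continuous.intervalIntegrable
    fun_prop

lemma G_tendsto (k : ℕ) :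
    Tendsto (fun n : ℕ => (∫ x in (0:ℝ)..π, sin x ^ n * x ^ k) /
      ((π/2)^k * Real.sqrt (2*π/n))) atTop (nhds 1) := by
  have hpik : ((π:ℝ)/2)^k ≠ 0 := by positivity
  have hterm : ∀ i ∈ Finset.range (k+1),
      Tendsto (fun n : ℕ => ((Nat.choose k i : ℝ) * (π/2)^(k-i) * MM n i) /
        ((π/2)^k * Real.sqrt (2*π/n))) atTop
        (nhds (if i = 0 then 1 else 0)) := by
    intro i hi
    have h1 := Tendsto.const_mul ((Nat.choose k i : ℝ) * (π/2)^(k-i) / (π/2)^k)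
      (MM_div_tendsto i)
    have h2 : (fun n : ℕ => ((Nat.choose k i : ℝ) * (π/2)^(k-i) / (π/2)^k) *
        (MM n i / Real.sqrt (2*π/n))) =
        (fun n : ℕ => ((Nat.choose k i : ℝ) * (π/2)^(k-i) * MM n i) /
        ((π/2)^k * Real.sqrt (2*π/n))) := by
      funext n
      rw [mul_div_mul_comm]
    rw [h2] at h1
    convert h1 using 2
    rcases Nat.eq_zero_or_pos i with rfl | hi0
    · simp [div_self hpik]
    · have : ¬ (i = 0) := by omega
      simp [this]
  have hsum := tendsto_finset_sum (Finset.range (k+1)) hterm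
  have hval : (∑ i ∈ Finset.range (k+1), (if i = 0 then (1:ℝ) else 0)) = 1 := by
    rw [Finset.sum_ite_eq' (Finset.range (k+1)) 0 (fun _ => (1:ℝ))]
    simp
  rw [hval] at hsum
  apply hsum.congr
  intro n
  rw [II_eq n k, Finset.sum_div]

theorem stmt_17 (ℓ j : ℕ) (hj : j ≤ ℓ) :
    Tendsto (fun d : ℕ =>
        ((1 / ((Nat.factorial (d + j) : ℝ) * (Nat.factorial (d + ℓ + 1 - (d + j + 1))))) *
            ∫ x in (0:ℝ)..Real.pi, Real.sin x ^ (d + j + 1 - 1) * x ^ (d + ℓ + 1 - (d + j + 1))) /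
          ((1 / ((Nat.factorial (d + j) : ℝ) * (Nat.factorial (ℓ - j)))) *
            (Real.pi / 2) ^ (ℓ - j) * Real.sqrt (2 * Real.pi / d)))
      atTop (nhds 1) := by
  have hs : Tendsto (fun d : ℕ =>
      Real.sqrt (2*π/((d + j : ℕ) : ℝ)) / Real.sqrt (2*π/(d : ℝ))) atTop (nhds 1) := by
    have hbase : Tendsto (fun d : ℕ => ((d:ℝ))/((d:ℝ)+(j:ℝ))) atTop (nhds 1) :=
      tendsto_natCast_div_add_atTop (j:ℝ)
    have hsqrt : Tendsto (fun d : ℕ => Real.sqrt (((d:ℝ))/((d:ℝ)+(j:ℝ)))) atTop (nhds 1) := by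
      have h1 := (Real.continuous_sqrt.tendsto 1).comp hbase
      rw [Real.sqrt_one] at h1
      exact h1
    apply hsqrt.congr'
    filter_upwards [eventually_ge_atTop 1] with d hd
    have hd0 : (0:ℝ) < d := by exact_mod_cast (by omega : 0 < d)
    have hdj0 : (0:ℝ) < (d:ℝ) + (j:ℝ) := by positivity
    rw [show ((d+j:ℕ):ℝ) = (d:ℝ)+(j:ℝ) by push_cast; ring]
    rw [← Real.sqrt_div (by positivity : (0:ℝ) ≤ 2*π/((d:ℝ)+(j:ℝ)))]
    congr 1
    field_simp
  have hG := (G_tendsto (ℓ - j)).comp (tendsto_add_atTop_nat j)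
  have hmul := hG.mul hs
  rw [mul_one] at hmul
  apply hmul.congr'
  filter_upwards [eventually_ge_atTop 1] with d hd
  simp only [Function.comp_apply]
  have e1 : d + j + 1 - 1 = d + j := by omega
  have e2 : d + ℓ + 1 - (d + j + 1) = ℓ - j := by omega
  rw [e1, e2]
  have hd0 : (0:ℝ) < d := by exact_mod_cast (by omega : 0 < d)
  have hdj0 : (0:ℝ) < ((d + j : ℕ) : ℝ) := by positivity
  have hs1 : (0:ℝ) < Real.sqrt (2*π/((d+j:ℕ):ℝ)) := Real.sqrt_pos.2 (by positivity)
  have hs2 : (0:ℝ) < Real.sqrt (2*π/(d:ℝ)) := Real.sqrt_pos.2 (by positivity)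
  have hpik : ((π:ℝ)/2)^(ℓ-j) ≠ 0 := by positivity
  have hf1 : ((Nat.factorial (d+j) : ℝ)) ≠ 0 := by
    exact_mod_cast (Nat.factorial_pos _).ne'
  have hf2 : ((Nat.factorial (ℓ-j) : ℝ)) ≠ 0 := by
    exact_mod_cast (Nat.factorial_pos _).ne'
  field_simp
end
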